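/- Let ρ and λ be positive integers, p a prime number, and x ∈ ℤ_p a p-adic integer that is algebraic over ℚ. Let (x_n)_{n≥1} be a nondecreasing sequence of positive integers such that for every n, p^n divides x − x_n in ℤ_p. If (x_n) is not eventually constant, then there exists N such that x_n ≥ λ·n + ρ for all n ≥ N. -/
import Mathlib

open Polynomial Filter

lemma growth_aux (K d a b : ℕ) : ∃ N : ℕ, ∀ n ≥ N, (K : ℤ) * (a*n+b)^d < 2^n := by
  have h2 : (1:ℝ) < 2 := one_lt_two
  have h := (tendsto_pow_const_div_const_pow_of_one_lt d h2).const_mul ((K:ℝ) * ((a:ℝ)+b)^d)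
  rw [mul_zero] at h
  have hev := (h.eventually (gt_mem_nhds (show (0:ℝ) < 1 by norm_num))).and (eventually_ge_atTop 1)
  obtain ⟨M, hM⟩ := hev.exists_forall_of_atTop
  refine ⟨M, fun n hn => ?_⟩
  obtain ⟨h1, hn1⟩ := hM n hn
  have hpow : (0:ℝ) < 2^n := by positivity
  rw [mul_div_assoc' , div_lt_iff₀ hpow, one_mul] at h1
  have key : (K:ℝ) * ((a:ℝ)+b)^d * (n:ℝ)^d < 2^n := h1
  have hle : ((a*n+b : ℕ) : ℝ) ≤ ((a:ℝ)+b) * n := by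
    push_cast
    have hb : (b:ℝ) ≤ (b:ℝ) * n := le_mul_of_one_le_right (by positivity) (by exact_mod_cast hn1)
    nlinarith [hb]
  have hKd : (K:ℝ) * ((a*n+b:ℕ):ℝ)^d ≤ (K:ℝ) * (((a:ℝ)+b)*n)^d := by
    have h0 : (0:ℝ) ≤ (K:ℝ) := by positivity
    exact mul_le_mul_of_nonneg_left (pow_le_pow_left₀ (by positivity) hle d) h0
  have : (K:ℝ) * ((a*n+b:ℕ):ℝ)^d < 2^n := by
    calc (K:ℝ) * ((a*n+b:ℕ):ℝ)^d ≤ (K:ℝ) * (((a:ℝ)+b)*n)^d := hKd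
    _ = (K:ℝ) * ((a:ℝ)+b)^d * (n:ℝ)^d := by rw [mul_pow]; ring
    _ < 2^n := key
  exact_mod_cast this

theorem stmt_19 (ρ lam : ℕ) (hρ : 0 < ρ) (hlam : 0 < lam)
    (p : ℕ) [Fact p.Prime] (x : ℤ_[p]) (halg : IsAlgebraic ℚ (x : ℚ_[p]))
    (xs : ℕ → ℕ) (hpos : ∀ n, 0 < xs n) (hmono : Monotone xs)
    (happrox : ∀ n : ℕ, (p : ℤ_[p]) ^ n ∣ x - (xs n : ℤ_[p]))
    (hnc : ¬ ∃ N : ℕ, ∀ n : ℕ, N ≤ n → xs n = xs N) :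
    ∃ N : ℕ, ∀ n : ℕ, N ≤ n → lam * n + ρ ≤ xs n := by
  -- get an integral polynomial
  have halgZ : IsAlgebraic ℤ (x : ℚ_[p]) :=
    (IsFractionRing.isAlgebraic_iff ℤ ℚ ℚ_[p]).mpr halg
  obtain ⟨P, hP0, hPx⟩ := halgZ
  -- aeval over ℤ_[p] is zero
  have hPxZ : Polynomial.aeval x P = 0 := by
    have h1 : ((Polynomial.aeval x P : ℤ_[p]) : ℚ_[p]) = Polynomial.aeval (x : ℚ_[p]) P := by
      simpa using (Polynomial.aeval_algebraMap_apply ℚ_[p] x P).symm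
    have : ((Polynomial.aeval x P : ℤ_[p]) : ℚ_[p]) = 0 := by rw [h1, hPx]
    exact Subtype.coe_injective this
  set d := P.natDegree with hd
  set Q := P.map (Int.castRingHom ℤ_[p]) with hQ
  have hQx : Q.eval x = 0 := by
    rw [hQ, Polynomial.eval_map, ← algebraMap_int_eq, ← Polynomial.aeval_def]
    exact hPxZ
  -- divisibility of integer values
  have hdvd : ∀ n : ℕ, ((p:ℤ))^n ∣ P.eval ((xs n : ℤ)) := by
    intro n
    have h1 : (p : ℤ_[p])^n ∣ Q.eval ((xs n : ℤ) : ℤ_[p]) - Q.eval x :=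
      dvd_trans (by
        have := happrox n
        have : (p : ℤ_[p]) ^ n ∣ ((xs n : ℤ_[p]) - x) := (dvd_sub_comm).mp this
        simpa using this) (Polynomial.sub_dvd_eval_sub _ _ Q)
    rw [hQx, sub_zero] at h1
    have h2 : Q.eval ((xs n : ℤ):ℤ_[p]) = ((P.eval (xs n : ℤ) : ℤ) : ℤ_[p]) :=
      Polynomial.eval_intCast_map (Int.castRingHom ℤ_[p]) P (xs n : ℤ)
    rw [h2] at h1
    exact (PadicInt.pow_p_dvd_int_iff n _).mp h1
  -- bound on integer roots
  have hfin : Set.Finite {r : ℤ | P.IsRoot r} := P.finite_setOf_isRoot hP0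
  obtain ⟨B, hB⟩ := hfin.bddAbove
  -- size bound on values
  set C : ℕ := ∑ i ∈ Finset.range (d+1), (P.coeff i).natAbs with hC
  have hsize : ∀ v : ℕ, 1 ≤ v → |P.eval (v:ℤ)| ≤ (C:ℤ) * (v:ℤ)^d := by
    intro v hv
    rw [Polynomial.eval_eq_sum_range]
    calc |∑ i ∈ Finset.range (d+1), P.coeff i * (v:ℤ)^i|
        ≤ ∑ i ∈ Finset.range (d+1), |P.coeff i * (v:ℤ)^i| := Finset.abs_sum_le_sum_abs _ _
      _ ≤ ∑ i ∈ Finset.range (d+1), ((P.coeff i).natAbs : ℤ) * (v:ℤ)^d := by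
          apply Finset.sum_le_sum
          intro i hi
          rw [abs_mul, Int.abs_eq_natAbs, abs_pow, abs_of_nonneg (by positivity : (0:ℤ) ≤ (v:ℤ))]
          have : ((v:ℤ))^i ≤ ((v:ℤ))^d :=
            pow_le_pow_right₀ (by exact_mod_cast hv) (Nat.lt_succ_iff.mp (Finset.mem_range.mp hi))
          exact mul_le_mul_of_nonneg_left this (Int.natCast_nonneg _)
      _ = (C:ℤ) * (v:ℤ)^d := by rw [hC]; push_cast; rw [Finset.sum_mul]
  -- unboundedness of xs
  push_neg at hnc
  have hclaim : ∀ k : ℕ, ∃ N, k ≤ xs N := by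
    intro k
    induction k with
    | zero => exact ⟨0, Nat.zero_le _⟩
    | succ k ih =>
        obtain ⟨N, hN⟩ := ih
        obtain ⟨n, hn, hne⟩ := hnc N
        exact ⟨n, Nat.succ_le_of_lt (lt_of_le_of_lt hN (lt_of_le_of_ne (hmono hn) (Ne.symm hne)))⟩
  obtain ⟨N2, hN2⟩ := hclaim (B.toNat + 1)
  obtain ⟨N1, hN1⟩ := growth_aux C d lam ρ
  refine ⟨max N1 N2, fun n hn => ?_⟩
  by_contra hcon
  push_neg at hcon
  have hvB : (B:ℤ) < ((xs n : ℤ)) := by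
    have h1 : B.toNat + 1 ≤ xs n := hN2.trans (hmono (le_trans (le_max_right _ _) hn))
    have h2 : (B:ℤ) ≤ (B.toNat : ℤ) := Int.self_le_toNat B
    omega
  have hroot : ¬ P.IsRoot ((xs n : ℤ)) := fun h => absurd (hB h) (not_le.mpr hvB)
  have hne : P.eval ((xs n : ℤ)) ≠ 0 := hroot
  have hdvdabs : ((p:ℤ))^n ∣ |P.eval ((xs n : ℤ))| := (dvd_abs _ _).mpr (hdvd n)
  have hlow : ((p:ℤ))^n ≤ |P.eval ((xs n : ℤ))| :=
    Int.le_of_dvd (abs_pos.mpr hne) hdvdabs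
  have hhigh := hsize (xs n) (hpos n)
  have h2p : (2:ℤ)^n ≤ ((p:ℤ))^n := by
    apply pow_le_pow_left₀ (by norm_num)
    exact_mod_cast (Fact.out : p.Prime).two_le
  have hmonov : (C:ℤ) * ((xs n : ℤ))^d ≤ (C:ℤ) * ((lam*n+ρ : ℕ):ℤ)^d := by
    apply mul_le_mul_of_nonneg_left _ (Int.natCast_nonneg _)
    apply pow_le_pow_left₀ (Int.natCast_nonneg _)
    exact_mod_cast le_of_lt hcon
  have hup := hN1 n (le_trans (le_max_left _ _) hn)
  have : ((p:ℤ))^n < ((p:ℤ))^n := by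
    calc ((p:ℤ))^n ≤ |P.eval ((xs n : ℤ))| := hlow
      _ ≤ (C:ℤ) * ((xs n : ℤ))^d := hhigh
      _ ≤ (C:ℤ) * ((lam*n+ρ : ℕ):ℤ)^d := hmonov
      _ < 2^n := by exact_mod_cast hup
      _ ≤ ((p:ℤ))^n := h2p
  exact absurd this (lt_irrefl _)
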